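/- arXiv:1711.11193 — 2 statements merged into one kernel-verified Lean document; each statement's English description precedes it below -/
import Mathlib

section
/- Fix reals 0 < R₁ < R₂ < R, α > 0, P_T > 0, 𝒩 > 0, γ > 0 and reflection coefficients 0 < ξ₂ ≤ ξ₁ ≤ 1; set κ = ξ₂/ξ₁. Let r₁ on [R₁, R₂] with density 2r/(R₂² − R₁²) and r₂ on [R₂, R] with density 2r/(R² − R₂²) be independent random variables, and let p₁ = P( P_T·ξ₁·r₁^{−2α}/(P_T·ξ₂·r₂^{−2α} + 𝒩) ≥ γ and P_T·ξ₂·r₂^{−2α}/𝒩 < γ ). If γ > P_T·ξ₂·R^{−2α}/𝒩 and R₂^{−2α} ≥ 𝒩·γ/(ξ₁·P_T) + γ·κ·min{R₂^{−2α}, 𝒩·γ/(ξ₂·P_T)}, then p₁ = ( R² − (min{R₂^{−2α}, 𝒩·γ/(ξ₂·P_T)})^{−1/α} ) / (R² − R₂²). -/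
/-!
Write `p = -2α` and `c = 𝒩γ/(ξ₂P_T)`. The far node fails exactly when its received power
`r₂ᵖ` is below `c`; since `r₂ > R₂`, this is `r₂ᵖ < m := min (R₂ᵖ) c`. The second hypothesis
says that whenever `r₂ᵖ < m`, the near node, whose power is at least `R₂ᵖ`, is decoded.
So the event is `r₂ > s := m^(1/p)`, whatever `r₁` is, and `R₂ ≤ s < R` by the first
hypothesis. Its probability is the tail `(R² - s²)/(R² - R₂²)` of the far-node density,
and `s² = m^(-1/α)`.
-/

open MeasureTheory Set

theorem intervalIntegral_ite_eq_of_iff_lt {f : ℝ → ℝ} {P : ℝ → Prop} [DecidablePred P]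
    {a b s : ℝ} (has : a ≤ s) (hsb : s ≤ b) (hP : ∀ x ∈ Ioc a b, P x ↔ s < x) :
    ∫ x in a..b, (if P x then f x else 0) = ∫ x in s..b, f x := by
  have hind : EqOn (fun x => if P x then f x else 0) ((Ioi s).indicator f) (Ioc a b) := by
    intro x hx
    simp only [indicator, mem_Ioi, hP x hx]
  rw [intervalIntegral.integral_of_le (has.trans hsb), intervalIntegral.integral_of_le hsb,
    setIntegral_congr_fun measurableSet_Ioc hind, setIntegral_indicator measurableSet_Ioi,
    Ioc_inter_Ioi, max_eq_right has]

theorem integral_two_mul_div (a b D : ℝ) :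
    ∫ x in a..b, 2 * x / D = (b ^ 2 - a ^ 2) / D := by
  rw [intervalIntegral.integral_div, intervalIntegral.integral_const_mul, integral_id]
  ring

theorem integral_radial_densities_ite_of_iff_lt {P : ℝ → ℝ → Prop}
    [∀ r₁, DecidablePred (P r₁)] {R₁ R₂ R s : ℝ} (h0 : 0 ≤ R₁) (h12 : R₁ < R₂)
    (hR₂s : R₂ ≤ s) (hsR : s ≤ R) (hP : ∀ r₁ ∈ Icc R₁ R₂, ∀ r₂ ∈ Ioc R₂ R, P r₁ r₂ ↔ s < r₂) :
    (∫ r₁ in R₁..R₂, ∫ r₂ in R₂..R,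
        if P r₁ r₂ then 2 * r₁ / (R₂ ^ 2 - R₁ ^ 2) * (2 * r₂ / (R ^ 2 - R₂ ^ 2)) else 0) =
      (R ^ 2 - s ^ 2) / (R ^ 2 - R₂ ^ 2) := by
  calc _ = ∫ r₁ in R₁..R₂,
          2 * r₁ / (R₂ ^ 2 - R₁ ^ 2) * ((R ^ 2 - s ^ 2) / (R ^ 2 - R₂ ^ 2)) := by
        refine intervalIntegral.integral_congr fun r₁ hr₁ => ?_
        rw [uIcc_of_le h12.le] at hr₁
        rw [intervalIntegral_ite_eq_of_iff_lt hR₂s hsR (hP r₁ hr₁),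
          intervalIntegral.integral_const_mul, integral_two_mul_div]
    _ = (R ^ 2 - s ^ 2) / (R ^ 2 - R₂ ^ 2) := by
        rw [intervalIntegral.integral_mul_const, integral_two_mul_div,
          div_self (by nlinarith), one_mul]

section Decoding

variable {PT Noise γ ξ₁ ξ₂ : ℝ}

theorem snr_lt_iff (hPT : 0 < PT) (hNoise : 0 < Noise) (hξ₂ : 0 < ξ₂) (v : ℝ) :
    PT * ξ₂ * v / Noise < γ ↔ v < Noise * γ / (ξ₂ * PT) := by
  rw [div_lt_iff₀ hNoise, lt_div_iff₀ (by positivity), mul_comm ξ₂ PT, mul_comm v, mul_comm γ]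

theorem le_sinr_of_interference_le {u v B m : ℝ} (hPT : 0 < PT) (hγ : 0 ≤ γ) (hξ₁ : 0 < ξ₁)
    (hξ₂ : 0 ≤ ξ₂) (hcond : Noise * γ / (ξ₁ * PT) + γ * (ξ₂ / ξ₁) * m ≤ B)
    (hden : 0 < PT * ξ₂ * v + Noise) (hvm : v ≤ m) (hBu : B ≤ u) :
    γ ≤ PT * ξ₁ * u / (PT * ξ₂ * v + Noise) := by
  rw [le_div_iff₀ hden]
  calc γ * (PT * ξ₂ * v + Noise) ≤ γ * (PT * ξ₂ * m + Noise) := by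
        gcongr
    _ = PT * ξ₁ * (Noise * γ / (ξ₁ * PT) + γ * (ξ₂ / ξ₁) * m) := by
        field_simp
        ring
    _ ≤ PT * ξ₁ * u := by gcongr; linarith

theorem near_only_decoded_iff (hPT : 0 < PT) (hNoise : 0 < Noise) (hγ : 0 < γ)
    (hξ₁ : 0 < ξ₁) (hξ₂ : 0 < ξ₂) {u v B : ℝ}
    (hcond : Noise * γ / (ξ₁ * PT) + γ * (ξ₂ / ξ₁) * min B (Noise * γ / (ξ₂ * PT)) ≤ B)
    (hv : 0 ≤ v) (hvB : v < B) (hBu : B ≤ u) :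
    (γ ≤ PT * ξ₁ * u / (PT * ξ₂ * v + Noise) ∧ PT * ξ₂ * v / Noise < γ) ↔
      v < min B (Noise * γ / (ξ₂ * PT)) := by
  rw [snr_lt_iff hPT hNoise hξ₂, lt_min_iff]
  refine ⟨fun ⟨_, hvc⟩ => ⟨hvB, hvc⟩, fun ⟨_, hvc⟩ => ⟨?_, hvc⟩⟩
  exact le_sinr_of_interference_le hPT hγ.le hξ₁ hξ₂.le hcond (by positivity)
    (le_min hvB.le hvc.le) hBu

end Decoding

theorem backcom_p1_second_case_formula_general
    (R₁ R₂ R α PT Noise γ ξ₁ ξ₂ κ : ℝ)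
    (h0 : 0 < R₁) (h12 : R₁ < R₂) (h2R : R₂ < R)
    (hα : 0 < α) (hPT : 0 < PT) (hNoise : 0 < Noise) (hγ : 0 < γ)
    (hξ2 : 0 < ξ₂) (hξ21 : ξ₂ ≤ ξ₁)
    (hκ : κ = ξ₂ / ξ₁)
    (hcond1 : PT * ξ₂ * R ^ (-(2 * α)) / Noise < γ)
    (hcond2 : Noise * γ / (ξ₁ * PT) +
        γ * κ * min (R₂ ^ (-(2 * α))) (Noise * γ / (ξ₂ * PT)) ≤ R₂ ^ (-(2 * α))) :
    (∫ r₁ in R₁..R₂, ∫ r₂ in R₂..R,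
        if γ ≤ PT * ξ₁ * r₁ ^ (-(2 * α)) / (PT * ξ₂ * r₂ ^ (-(2 * α)) + Noise) ∧
            PT * ξ₂ * r₂ ^ (-(2 * α)) / Noise < γ
        then 2 * r₁ / (R₂ ^ 2 - R₁ ^ 2) * (2 * r₂ / (R ^ 2 - R₂ ^ 2)) else 0) =
      (R ^ 2 - (min (R₂ ^ (-(2 * α))) (Noise * γ / (ξ₂ * PT))) ^ (-(1 / α))) /
        (R ^ 2 - R₂ ^ 2) := by
  subst hκ
  have hξ1 : 0 < ξ₁ := hξ2.trans_le hξ21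
  have hR₂ : 0 < R₂ := h0.trans h12
  have hp : -(2 * α) < 0 := by linarith
  set m := min (R₂ ^ (-(2 * α))) (Noise * γ / (ξ₂ * PT))
  have hm0 : 0 < m := lt_min (Real.rpow_pos_of_pos hR₂ _) (by positivity)
  set s := m ^ (-(2 * α))⁻¹ with hs
  have hR₂s : R₂ ≤ s := (Real.le_rpow_inv_iff_of_neg hR₂ hm0 hp).2 (min_le_left _ _)
  have hsR : s ≤ R := by
    refine ((Real.rpow_inv_lt_iff_of_neg hm0 (hR₂.trans h2R) hp).2 (lt_min ?_ ?_)).le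
    · exact Real.rpow_lt_rpow_of_neg hR₂ h2R hp
    · exact (snr_lt_iff hPT hNoise hξ2 _).1 hcond1
  have hevent : ∀ r₁ ∈ Icc R₁ R₂, ∀ r₂ ∈ Ioc R₂ R,
      (γ ≤ PT * ξ₁ * r₁ ^ (-(2 * α)) / (PT * ξ₂ * r₂ ^ (-(2 * α)) + Noise) ∧
        PT * ξ₂ * r₂ ^ (-(2 * α)) / Noise < γ) ↔ s < r₂ := by
    rintro r₁ ⟨hr₁, hr₁'⟩ r₂ ⟨hr₂, -⟩
    rw [near_only_decoded_iff hPT hNoise hγ hξ1 hξ2 hcond2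
      (Real.rpow_pos_of_pos (hR₂.trans hr₂) _).le
      (Real.rpow_lt_rpow_of_neg hR₂ hr₂ hp)
      (Real.rpow_le_rpow_of_nonpos (h0.trans_le hr₁) hr₁' hp.le),
      Real.rpow_inv_lt_iff_of_neg hm0 (hR₂.trans hr₂) hp]
  rw [integral_radial_densities_ite_of_iff_lt h0.le h12 hR₂s hsR hevent, hs,
    ← Real.rpow_mul_natCast hm0.le]
  congr 3
  push_cast
  field_simp

/-- Two-node pairing, fading-free, with `κ = ξ₂/ξ₁`. `p₁` is the
probability (double integral of the joint density of `r₁`, `r₂` over the event) that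
only the stronger (near) signal is successfully decoded. If `γ > P_T·ξ₂·R^{−2α}/𝒩`
and `R₂^{−2α} ≥ 𝒩γ/(ξ₁P_T) + γκ·min{R₂^{−2α}, 𝒩γ/(ξ₂P_T)}`, then
`p₁ = (R² − (min{R₂^{−2α}, 𝒩γ/(ξ₂P_T)})^{−1/α})/(R² − R₂²)`. -/
theorem backcom_p1_second_case_formula
    (R₁ R₂ R α PT Noise γ ξ₁ ξ₂ κ : ℝ)
    (h0 : 0 < R₁) (h12 : R₁ < R₂) (h2R : R₂ < R)
    (hα : 0 < α) (hPT : 0 < PT) (hNoise : 0 < Noise) (hγ : 0 < γ)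
    (hξ2 : 0 < ξ₂) (hξ21 : ξ₂ ≤ ξ₁) (hξ1 : ξ₁ ≤ 1)
    (hκ : κ = ξ₂ / ξ₁)
    (hcond1 : PT * ξ₂ * R ^ (-(2 * α)) / Noise < γ)
    (hcond2 : Noise * γ / (ξ₁ * PT) +
        γ * κ * min (R₂ ^ (-(2 * α))) (Noise * γ / (ξ₂ * PT)) ≤ R₂ ^ (-(2 * α))) :
    (∫ r₁ in R₁..R₂, ∫ r₂ in R₂..R,
        if γ ≤ PT * ξ₁ * r₁ ^ (-(2 * α)) / (PT * ξ₂ * r₂ ^ (-(2 * α)) + Noise) ∧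
            PT * ξ₂ * r₂ ^ (-(2 * α)) / Noise < γ
        then 2 * r₁ / (R₂ ^ 2 - R₁ ^ 2) * (2 * r₂ / (R ^ 2 - R₂ ^ 2)) else 0) =
      (R ^ 2 - (min (R₂ ^ (-(2 * α))) (Noise * γ / (ξ₂ * PT))) ^ (-(1 / α))) /
        (R ^ 2 - R₂ ^ 2) :=
  backcom_p1_second_case_formula_general R₁ R₂ R α PT Noise γ ξ₁ ξ₂ κ h0 h12 h2R hα hPT hNoise hγ
    hξ2 hξ21 hκ hcond1 hcond2
end

section
/- Fix m > 0, α > 0 and 0 < R_l < R_u, and let Φ(x) be the cumulative distribution function of g²·r^{−2α}, where g has Gamma density m^m·g^{m−1}·e^{−m·g}/Γ(m) on (0, ∞) and r is independent with density 2r/(R_u² − R_l²) on [R_l, R_u]. Then for every x > 0, Φ is differentiable at x with derivative Φ′(x) = Γ[m + 2/α, m·R_l^{α}·√x, m·R_u^{α}·√x] / ( m^{2/α}·x^{1/α + 1}·α·(R_u² − R_l²)·Γ(m) ); i.e., the composite variable g²·r^{−2α} has this function as its probability density. -/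
open MeasureTheory Set Real

/-- Generalized incomplete gamma function `Γ[a, x₀, x₁] = ∫_{x₀}^{x₁} t^{a−1} e^{−t} dt`. -/
noncomputable def gGamma (a x₀ x₁ : ℝ) : ℝ := ∫ t in x₀..x₁, t ^ (a - 1) * Real.exp (-t)

/-- The CDF `Φ(x) = P(g²·r^{−2α} < x)` of the composite variable, where `g` has Gamma
density `m^m g^{m−1} e^{−mg}/Γ(m)` on `(0,∞)` and `r` independently has density
`2r/(R_u² − R_l²)` on `[R_l, R_u]`, expressed as the double integral of the joint
density over the event. -/
noncomputable def compositeCDF (m α Rl Ru x : ℝ) : ℝ :=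
  ∫ g in Set.Ioi (0 : ℝ), ∫ r in Rl..Ru,
    if g ^ 2 * r ^ (-(2 * α)) < x
    then m ^ m * g ^ (m - 1) * Real.exp (-m * g) / Real.Gamma m *
      (2 * r / (Ru ^ 2 - Rl ^ 2)) else 0

noncomputable def phi (a t : ℝ) : ℝ := t ^ (a - 1) * Real.exp (-t)

lemma phi_meas (a : ℝ) : Measurable (phi a) :=
by
  unfold phi
  exact (by measurability : Measurable fun t : ℝ => t ^ (a - 1)).mul
    (Real.continuous_exp.comp continuous_neg).measurable

lemma phi_contAt {a t : ℝ} (ht : 0 < t) : ContinuousAt (phi a) t :=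
  ((Real.continuousAt_rpow_const t (a - 1) (Or.inl ht.ne')).mul
    ((Real.continuous_exp.comp continuous_neg).continuousAt))

lemma phi_ii {a p q : ℝ} (hp : 0 < p) (hq : 0 < q) :
    IntervalIntegrable (phi a) volume p q := by
  apply ContinuousOn.intervalIntegrable
  intro t ht
  have h1 : p ⊓ q ≤ t := ht.1
  exact (phi_contAt (lt_of_lt_of_le (lt_min hp hq) h1)).continuousWithinAt

lemma phi_ii0 {a : ℝ} (ha : 0 < a) {v : ℝ} (hv : 0 ≤ v) :
    IntervalIntegrable (phi a) volume 0 v := by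
  have hg : IntervalIntegrable (fun t : ℝ => t ^ (a - 1)) volume 0 v :=
    intervalIntegral.intervalIntegrable_rpow' (by linarith)
  refine hg.mono_fun ((phi_meas a).aestronglyMeasurable) ?_
  refine (ae_restrict_iff' measurableSet_uIoc).mpr (ae_of_all _ fun t ht => ?_)
  rw [Set.uIoc_of_le hv] at ht
  have ht0 : 0 < t := ht.1
  have h1 : (0:ℝ) ≤ t ^ (a - 1) := Real.rpow_nonneg ht0.le _
  have h2 : Real.exp (-t) ≤ 1 := Real.exp_le_one_iff.mpr (by linarith)
  simp only [phi, Real.norm_eq_abs, abs_of_nonneg h1,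
    abs_of_nonneg (mul_nonneg h1 (Real.exp_pos _).le)]
  nlinarith [Real.exp_pos (-t)]

lemma hasDerivAt_F (a : ℝ) {u : ℝ} (hu : 0 < u) :
    HasDerivAt (fun v => ∫ t in (1:ℝ)..v, phi a t) (phi a u) u :=
  intervalIntegral.integral_hasDerivAt_right (phi_ii one_pos hu)
    ⟨Set.univ, Filter.univ_mem, (phi_meas a).aestronglyMeasurable⟩ (phi_contAt hu)

lemma inner_eval (m α Rl Ru x : ℝ) (hα : 0 < α) (h0 : 0 < Rl) (hlu : Rl < Ru)
    (hx : 0 < x) {g : ℝ} (hg : 0 < g) :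
    (∫ r in Rl..Ru,
      if g ^ 2 * r ^ (-(2 * α)) < x
      then m ^ m * g ^ (m - 1) * Real.exp (-m * g) / Real.Gamma m *
        (2 * r / (Ru ^ 2 - Rl ^ 2)) else 0)
    = m ^ m * g ^ (m - 1) * Real.exp (-m * g) / Real.Gamma m *
      ((Ru ^ 2 - (min Ru (max Rl ((g / Real.sqrt x) ^ α⁻¹))) ^ 2) / (Ru ^ 2 - Rl ^ 2)) := by
  set C : ℝ := m ^ m * g ^ (m - 1) * Real.exp (-m * g) / Real.Gamma m with hC
  set c : ℝ := Real.sqrt x with hcdef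
  have hc : 0 < c := Real.sqrt_pos.mpr hx
  have hA : (0:ℝ) < Ru ^ 2 - Rl ^ 2 := by nlinarith
  set A : ℝ := Ru ^ 2 - Rl ^ 2 with hAdef
  set r₀ : ℝ := (g / c) ^ α⁻¹ with hr0def
  have hr0pos : 0 < r₀ := Real.rpow_pos_of_pos (div_pos hg hc) _
  -- condition ↔ r₀ < r for r > 0
  have hcond : ∀ r : ℝ, 0 < r → (g ^ 2 * r ^ (-(2 * α)) < x ↔ r₀ < r) := by
    intro r hr
    have h2 : (0:ℝ) < r ^ (2 * α) := Real.rpow_pos_of_pos hr _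
    have e1 : g ^ 2 * r ^ (-(2 * α)) = g ^ 2 / r ^ (2 * α) := by
      rw [Real.rpow_neg hr.le, div_eq_mul_inv]
    rw [e1, div_lt_iff₀ h2]
    have e2 : r₀ < r ↔ g / c < r ^ α := by
      rw [hr0def]
      exact Real.rpow_inv_lt_iff_of_pos (div_pos hg hc).le hr.le hα
    rw [e2, div_lt_iff₀ hc]
    have e3 : x * r ^ (2 * α) = (r ^ α * c) * (r ^ α * c) := by
      have : r ^ (2 * α) = r ^ α * r ^ α := by
        rw [← Real.rpow_add hr]; ring_nf
      rw [this, ← Real.mul_self_sqrt hx.le, ← hcdef]; ring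
    rw [e3, pow_two]
    constructor
    · intro h
      by_contra hcon
      push_neg at hcon
      exact absurd h (not_lt.mpr (mul_le_mul hcon hcon (by positivity) hg.le))
    · intro h
      have hgle : 0 ≤ g := hg.le
      exact mul_lt_mul' h.le h hgle (by positivity)
  -- rewrite integrand as indicator
  have hRl : Rl ≤ Ru := hlu.le
  rw [intervalIntegral.integral_of_le hRl]
  have hcongr : EqOn
      (fun r : ℝ => if g ^ 2 * r ^ (-(2 * α)) < x then C * (2 * r / A) else 0)
      (fun r : ℝ => Set.indicator (Set.Ioi r₀) (fun r => C * (2 * r / A)) r)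
      (Set.Ioc Rl Ru) := by
    intro r hr
    have hrpos : 0 < r := lt_trans h0 hr.1
    simp only [Set.indicator_apply, Set.mem_Ioi]
    exact if_congr (hcond r hrpos) rfl rfl
  rw [MeasureTheory.setIntegral_congr_fun measurableSet_Ioc hcongr,
    MeasureTheory.setIntegral_indicator measurableSet_Ioi]
  have hset : Set.Ioc Rl Ru ∩ Set.Ioi r₀ = Set.Ioc (max Rl r₀) Ru := by
    ext r
    simp only [Set.mem_inter_iff, Set.mem_Ioc, Set.mem_Ioi, max_lt_iff]
    tauto
  rw [hset]
  rcases le_or_gt (max Rl r₀) Ru with hle | hgt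
  · rw [← intervalIntegral.integral_of_le hle]
    have : ∀ r : ℝ, C * (2 * r / A) = (2 * C / A) * r := fun r => by ring
    simp_rw [this]
    rw [intervalIntegral.integral_const_mul]
    have hid : (∫ r in (max Rl r₀)..Ru, r) = (Ru ^ 2 - (max Rl r₀) ^ 2) / 2 :=
      open intervalIntegral in integral_id
    rw [hid]
    have hmin : min Ru (max Rl r₀) = max Rl r₀ := min_eq_right hle
    rw [hmin]
    field_simp
  · rw [Set.Ioc_eq_empty (not_lt.mpr hgt.le), MeasureTheory.setIntegral_empty]
    have hmin : min Ru (max Rl r₀) = Ru := min_eq_left hgt.le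
    rw [hmin]
    simp

lemma den_eq {m : ℝ} (hm : 0 < m) (hG : Real.Gamma m ≠ 0) {g : ℝ} (hg : 0 ≤ g) :
    m ^ m * g ^ (m - 1) * Real.exp (-m * g) / Real.Gamma m
      = (Real.Gamma m)⁻¹ * (m * phi m (m * g)) := by
  unfold phi
  rw [Real.mul_rpow hm.le hg]
  have e2 : m ^ m = m * m ^ (m - 1) := by
    rw [show m ^ m = m ^ (1 + (m - 1)) from by norm_num, Real.rpow_add hm, Real.rpow_one]
  rw [e2, neg_mul]
  field_simp

lemma compositeCDF_eq (m α Rl Ru : ℝ) (hm : 0 < m) (hα : 0 < α) (h0 : 0 < Rl)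
    (hlu : Rl < Ru) (x : ℝ) (hx : 0 < x) :
    compositeCDF m α Rl Ru x =
      (Real.Gamma m)⁻¹ * (∫ t in (0:ℝ)..(m * Rl ^ α * Real.sqrt x), phi m t)
      + (Real.Gamma m * (Ru ^ 2 - Rl ^ 2))⁻¹ * Ru ^ 2 *
          gGamma m (m * Rl ^ α * Real.sqrt x) (m * Ru ^ α * Real.sqrt x)
      - (Real.Gamma m * (Ru ^ 2 - Rl ^ 2))⁻¹ * (m ^ (2 / α))⁻¹ * x ^ (-(1 / α)) *
          gGamma (m + 2 / α) (m * Rl ^ α * Real.sqrt x) (m * Ru ^ α * Real.sqrt x) := by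
  have hG : 0 < Real.Gamma m := Real.Gamma_pos_of_pos hm
  have hA : (0:ℝ) < Ru ^ 2 - Rl ^ 2 := by nlinarith
  set G : ℝ := Real.Gamma m with hGdef
  set c : ℝ := Real.sqrt x with hcdef
  have hc : 0 < c := Real.sqrt_pos.mpr hx
  have hcsq : c * c = x := Real.mul_self_sqrt hx.le
  have hRlα : (0:ℝ) < Rl ^ α := Real.rpow_pos_of_pos h0 α
  have hRuα : (0:ℝ) < Ru ^ α := Real.rpow_pos_of_pos (h0.trans hlu) α
  have hαlt : Rl ^ α < Ru ^ α := Real.rpow_lt_rpow h0.le hlu hα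
  set g₁ : ℝ := Rl ^ α * c with hg1def
  set g₂ : ℝ := Ru ^ α * c with hg2def
  have hg1 : 0 < g₁ := mul_pos hRlα hc
  have hg2 : 0 < g₂ := mul_pos hRuα hc
  have hg12 : g₁ < g₂ := by
    apply mul_lt_mul_of_pos_right hαlt hc
  -- the pointwise-evaluated integrand
  set A : ℝ := Ru ^ 2 - Rl ^ 2 with hAdef
  set h : ℝ → ℝ := fun g => m ^ m * g ^ (m - 1) * Real.exp (-m * g) / G *
      ((Ru ^ 2 - (min Ru (max Rl ((g / c) ^ α⁻¹))) ^ 2) / A) with hhdef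
  have hΦ : compositeCDF m α Rl Ru x = ∫ g in Set.Ioi (0:ℝ), h g := by
    unfold compositeCDF
    exact MeasureTheory.setIntegral_congr_fun measurableSet_Ioi
      (fun g hg => inner_eval m α Rl Ru x hα h0 hlu hx hg)
  -- monotonicity facts for r₀ g = (g/c)^α⁻¹
  have hr0le : ∀ g : ℝ, 0 < g → ((g / c) ^ α⁻¹ ≤ Rl ↔ g ≤ g₁) := by
    intro g hg
    rw [Real.rpow_inv_le_iff_of_pos (div_pos hg hc).le h0.le hα, div_le_iff₀ hc, hg1def]
  have hr0le' : ∀ g : ℝ, 0 < g → ((g / c) ^ α⁻¹ ≤ Ru ↔ g ≤ g₂) := by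
    intro g hg
    rw [Real.rpow_inv_le_iff_of_pos (div_pos hg hc).le (h0.trans hlu).le hα,
      div_le_iff₀ hc, hg2def]
  have hr0ge : ∀ g : ℝ, 0 < g → (Ru ≤ (g / c) ^ α⁻¹ ↔ g₂ ≤ g) := by
    intro g hg
    rw [Real.le_rpow_inv_iff_of_pos (h0.trans hlu).le (div_pos hg hc).le hα,
      le_div_iff₀ hc, hg2def]
  -- piecewise values of h
  have hpiece1 : ∀ g ∈ Set.Ioc (0:ℝ) g₁, h g = G⁻¹ * (m * phi m (m * g)) := by
    intro g hg
    have hr0 : (g / c) ^ α⁻¹ ≤ Rl := (hr0le g hg.1).mpr hg.2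
    rw [hhdef]
    simp only
    rw [max_eq_left hr0, min_eq_right hlu.le, div_self hA.ne', mul_one,
      den_eq hm hG.ne' hg.1.le]
  have hpiece2 : ∀ g ∈ Set.Icc g₁ g₂,
      h g = (G * A)⁻¹ * (m * (phi m (m * g) *
        (Ru ^ 2 - (((m * g) / (m * c)) ^ α⁻¹) ^ 2))) := by
    intro g hg
    have hgpos : 0 < g := lt_of_lt_of_le hg1 hg.1
    have hr1 : Rl ≤ (g / c) ^ α⁻¹ := by
      rw [Real.le_rpow_inv_iff_of_pos h0.le (div_pos hgpos hc).le hα, le_div_iff₀ hc, ← hg1def]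
      exact hg.1
    have hr2 : (g / c) ^ α⁻¹ ≤ Ru := (hr0le' g hgpos).mpr hg.2
    rw [hhdef]
    simp only
    rw [max_eq_right hr1, min_eq_right hr2, den_eq hm hG.ne' hgpos.le,
      mul_div_mul_left g c hm.ne']
    field_simp
    ring
  have hpiece3 : ∀ g ∈ Set.Ioi g₂, h g = 0 := by
    intro g hg
    have hgpos : 0 < g := lt_trans hg2 hg
    have hr : Ru ≤ (g / c) ^ α⁻¹ := (hr0ge g hgpos).mpr (le_of_lt hg)
    rw [hhdef]
    simp only
    rw [min_eq_left (le_max_of_le_right hr)]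
    simp
  -- integrable pieces
  set F1 : ℝ → ℝ := fun g => G⁻¹ * (m * phi m (m * g)) with hF1def
  have hphi1 : IntervalIntegrable (fun g => phi m (m * g)) volume 0 g₁ := by
    have h1 : IntervalIntegrable (phi m) volume 0 (m * g₁) := phi_ii0 hm (by positivity)
    have h2 := h1.comp_mul_left (c := m)
    rwa [zero_div, mul_div_cancel_left₀ _ hm.ne'] at h2
  have hF1ii : IntervalIntegrable F1 volume 0 g₁ := (hphi1.const_mul m).const_mul G⁻¹
  set ψ : ℝ → ℝ := fun t => phi m t * (Ru ^ 2 - ((t / (m * c)) ^ α⁻¹) ^ 2) with hψdef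
  have hψcont : ∀ t : ℝ, 0 < t → ContinuousAt ψ t := by
    intro t ht
    apply (phi_contAt ht).mul
    apply ContinuousAt.sub continuousAt_const
    apply ContinuousAt.pow
    refine (continuousAt_id.div continuousAt_const (by positivity)).rpow_const (Or.inl ?_)
    show id t / (m * c) ≠ 0
    simp only [id]
    positivity
  set F2 : ℝ → ℝ := fun g => (G * A)⁻¹ * (m * ψ (m * g)) with hF2def
  have hF2ii : IntervalIntegrable F2 volume g₁ g₂ := by
    apply ContinuousOn.intervalIntegrable
    intro g hg
    have hgpos : 0 < g := lt_of_lt_of_le (lt_min hg1 hg2) hg.1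
    apply ContinuousAt.continuousWithinAt
    exact (continuousAt_const.mul (continuousAt_const.mul
      ((hψcont (m * g) (by positivity)).comp
        (continuousAt_const.mul continuousAt_id))))
  have hi1 : MeasureTheory.IntegrableOn h (Set.Ioc 0 g₁) := by
    refine (hF1ii.1).congr_fun ?_ measurableSet_Ioc
    exact fun g hg => (hpiece1 g hg).symm
  have hi2 : MeasureTheory.IntegrableOn h (Set.Ioc g₁ g₂) := by
    refine (hF2ii.1).congr_fun ?_ measurableSet_Ioc
    exact fun g hg => (hpiece2 g (Set.Ioc_subset_Icc_self hg)).symm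
  have hi3 : MeasureTheory.IntegrableOn h (Set.Ioi g₂) := by
    refine (MeasureTheory.integrableOn_zero).congr_fun ?_ measurableSet_Ioi
    exact fun g hg => (hpiece3 g hg).symm
  -- splitting
  have hsplit2 : (∫ g in Set.Ioi g₁, h g)
      = (∫ g in Set.Ioc g₁ g₂, h g) + ∫ g in Set.Ioi g₂, h g := by
    rw [← Set.Ioc_union_Ioi_eq_Ioi hg12.le]
    exact MeasureTheory.setIntegral_union (Set.Ioc_disjoint_Ioi le_rfl)
      measurableSet_Ioi hi2 hi3
  have hsplit1 : (∫ g in Set.Ioi (0:ℝ), h g)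
      = (∫ g in Set.Ioc (0:ℝ) g₁, h g) + ∫ g in Set.Ioi g₁, h g := by
    rw [← Set.Ioc_union_Ioi_eq_Ioi hg1.le]
    refine MeasureTheory.setIntegral_union (Set.Ioc_disjoint_Ioi le_rfl)
      measurableSet_Ioi hi1 ?_
    rw [← Set.Ioc_union_Ioi_eq_Ioi hg12.le]
    exact hi2.union hi3
  have hz : (∫ g in Set.Ioi g₂, h g) = 0 := by
    rw [MeasureTheory.setIntegral_congr_fun measurableSet_Ioi hpiece3]
    simp
  -- piece 1 value
  have hp1 : (∫ g in Set.Ioc (0:ℝ) g₁, h g)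
      = G⁻¹ * ∫ t in (0:ℝ)..(m * g₁), phi m t := by
    rw [MeasureTheory.setIntegral_congr_fun measurableSet_Ioc hpiece1,
      ← intervalIntegral.integral_of_le hg1.le, intervalIntegral.integral_const_mul]
    congr 1
    rw [intervalIntegral.integral_const_mul,
      intervalIntegral.integral_comp_mul_left (phi m) hm.ne', mul_zero, smul_eq_mul,
      ← mul_assoc, mul_inv_cancel₀ hm.ne', one_mul]
  -- piece 2 value
  have hp2 : (∫ g in Set.Ioc g₁ g₂, h g)
      = (G * A)⁻¹ * ∫ t in (m * g₁)..(m * g₂), ψ t := by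
    have heq : Set.EqOn h F2 (Set.Ioc g₁ g₂) := by
      intro g hg
      exact hpiece2 g (Set.Ioc_subset_Icc_self hg)
    rw [MeasureTheory.setIntegral_congr_fun measurableSet_Ioc heq,
      ← intervalIntegral.integral_of_le hg12.le, hF2def]
    simp only
    rw [intervalIntegral.integral_const_mul]
    congr 1
    rw [intervalIntegral.integral_const_mul,
      intervalIntegral.integral_comp_mul_left ψ hm.ne', smul_eq_mul,
      ← mul_assoc, mul_inv_cancel₀ hm.ne', one_mul]
  -- evaluate the ψ integral
  have hψeq : Set.EqOn ψ
      (fun t => Ru ^ 2 * phi m t - ((m ^ (2/α))⁻¹ * x ^ (-(1/α))) * phi (m + 2/α) t)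
      (Set.uIcc (m * g₁) (m * g₂)) := by
    intro t ht
    have htpos : 0 < t := by
      have h1 : min (m * g₁) (m * g₂) ≤ t := ht.1
      have h2 : (0:ℝ) < min (m * g₁) (m * g₂) := lt_min (by positivity) (by positivity)
      linarith
    have hmc : (0:ℝ) < m * c := by positivity
    have h1 : ((t / (m * c)) ^ α⁻¹) ^ 2 = (t / (m * c)) ^ (2/α) := by
      rw [← Real.rpow_natCast ((t / (m * c)) ^ α⁻¹) 2,
        ← Real.rpow_mul (by positivity : (0:ℝ) ≤ t / (m * c))]
      congr 1
      push_cast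
      ring
    have hcx : c ^ (2/α) = x ^ (1/α) := by
      rw [show (2/α : ℝ) = (2:ℝ) * (1/α) by ring, Real.rpow_mul hc.le]
      congr 1
      rw [show ((2:ℝ) : ℝ) = ((2:ℕ) : ℝ) by norm_num, Real.rpow_natCast]
      rw [pow_two, hcsq]
    have h2 : (t / (m * c)) ^ (2/α) = t ^ (2/α) * ((m ^ (2/α))⁻¹ * x ^ (-(1/α))) := by
      rw [Real.div_rpow htpos.le hmc.le, Real.mul_rpow hm.le hc.le, hcx,
        Real.rpow_neg hx.le]
      field_simp
    have h3 : phi m t * t ^ (2/α) = phi (m + 2/α) t := by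
      unfold phi
      rw [show m + 2/α - 1 = (m - 1) + 2/α by ring, Real.rpow_add htpos]
      ring
    show phi m t * (Ru ^ 2 - ((t / (m * c)) ^ α⁻¹) ^ 2) = _
    rw [h1, h2]
    simp only
    rw [mul_sub, ← h3]
    ring
  have hψint : (∫ t in (m * g₁)..(m * g₂), ψ t)
      = Ru ^ 2 * gGamma m (m * g₁) (m * g₂)
        - ((m ^ (2/α))⁻¹ * x ^ (-(1/α))) * gGamma (m + 2/α) (m * g₁) (m * g₂) := by
    rw [intervalIntegral.integral_congr hψeq]
    have i1 : IntervalIntegrable (phi m) volume (m * g₁) (m * g₂) :=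
      phi_ii (by positivity) (by positivity)
    have i2 : IntervalIntegrable (phi (m + 2/α)) volume (m * g₁) (m * g₂) :=
      phi_ii (by positivity) (by positivity)
    rw [intervalIntegral.integral_sub (i1.const_mul _) (i2.const_mul _),
      intervalIntegral.integral_const_mul, intervalIntegral.integral_const_mul]
    rfl
  -- assemble
  rw [hΦ, hsplit1, hsplit2, hz, hp1, hp2, hψint,
    show m * g₁ = m * Rl ^ α * c from by rw [hg1def]; ring,
    show m * g₂ = m * Ru ^ α * c from by rw [hg2def]; ring]
  ring

lemma gGamma_eq_F (a : ℝ) {p q : ℝ} (hp : 0 < p) (hq : 0 < q) :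
    gGamma a p q = (∫ t in (1:ℝ)..q, phi a t) - ∫ t in (1:ℝ)..p, phi a t := by
  rw [intervalIntegral.integral_interval_sub_left (phi_ii one_pos hq) (phi_ii one_pos hp)]
  rfl

/-- At every `x > 0` the composite CDF `Φ` is differentiable with
derivative `Γ[m + 2/α, m R_l^α √x, m R_u^α √x] / (m^{2/α} x^{1/α+1} α (R_u²−R_l²) Γ(m))`;
i.e. the composite variable `g²·r^{−2α}` has this function as its probability density. -/
theorem backcom_composite_pdf
    (m α Rl Ru : ℝ) (hm : 0 < m) (hα : 0 < α) (h0 : 0 < Rl) (hlu : Rl < Ru)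
    (x : ℝ) (hx : 0 < x) :
    HasDerivAt (compositeCDF m α Rl Ru)
      (gGamma (m + 2 / α) (m * Rl ^ α * Real.sqrt x) (m * Ru ^ α * Real.sqrt x) /
        (m ^ (2 / α) * x ^ (1 / α + 1) * α * (Ru ^ 2 - Rl ^ 2) * Real.Gamma m)) x := by

  have hG : 0 < Real.Gamma m := Real.Gamma_pos_of_pos hm
  have hA : (0:ℝ) < Ru ^ 2 - Rl ^ 2 := by nlinarith
  set G : ℝ := Real.Gamma m with hGdef
  set A : ℝ := Ru ^ 2 - Rl ^ 2 with hAdef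
  set c : ℝ := Real.sqrt x with hcdef
  have hc : 0 < c := Real.sqrt_pos.mpr hx
  have hcsq : c * c = x := Real.mul_self_sqrt hx.le
  have hRlα : (0:ℝ) < Rl ^ α := Real.rpow_pos_of_pos h0 α
  have hRuα : (0:ℝ) < Ru ^ α := Real.rpow_pos_of_pos (h0.trans hlu) α
  have hp : (0:ℝ) < m * Rl ^ α * c := by positivity
  have hq : (0:ℝ) < m * Ru ^ α * c := by positivity
  set p : ℝ := m * Rl ^ α * c with hpdef
  set q : ℝ := m * Ru ^ α * c with hqdef
  set H : ℝ → ℝ := fun y =>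
    G⁻¹ * (∫ t in (0:ℝ)..(m * Rl ^ α * Real.sqrt y), phi m t)
    + (G * A)⁻¹ * Ru ^ 2 * gGamma m (m * Rl ^ α * Real.sqrt y) (m * Ru ^ α * Real.sqrt y)
    - (G * A)⁻¹ * (m ^ (2 / α))⁻¹ * y ^ (-(1 / α)) *
        gGamma (m + 2 / α) (m * Rl ^ α * Real.sqrt y) (m * Ru ^ α * Real.sqrt y)
    with hHdef
  have hΦH : compositeCDF m α Rl Ru =ᶠ[nhds x] H := by
    filter_upwards [Ioi_mem_nhds hx] with y hy
    exact compositeCDF_eq m α Rl Ru hm hα h0 hlu y hy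
  set Fm : ℝ → ℝ := fun v => ∫ t in (1:ℝ)..v, phi m t with hFmdef
  set Fp : ℝ → ℝ := fun v => ∫ t in (1:ℝ)..v, phi (m + 2 / α) t with hFpdef
  set H' : ℝ → ℝ := fun y =>
    G⁻¹ * ((∫ t in (0:ℝ)..(1:ℝ), phi m t) + Fm (m * Rl ^ α * Real.sqrt y))
    + (G * A)⁻¹ * Ru ^ 2 *
        (Fm (m * Ru ^ α * Real.sqrt y) - Fm (m * Rl ^ α * Real.sqrt y))
    - (G * A)⁻¹ * (m ^ (2 / α))⁻¹ * y ^ (-(1 / α)) *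
        (Fp (m * Ru ^ α * Real.sqrt y) - Fp (m * Rl ^ α * Real.sqrt y))
    with hH'def
  have hHH' : H =ᶠ[nhds x] H' := by
    filter_upwards [Ioi_mem_nhds hx] with y hy
    have hcy : 0 < Real.sqrt y := Real.sqrt_pos.mpr hy
    have hpy : (0:ℝ) < m * Rl ^ α * Real.sqrt y := by positivity
    have hqy : (0:ℝ) < m * Ru ^ α * Real.sqrt y := by positivity
    have e1 : (∫ t in (0:ℝ)..(m * Rl ^ α * Real.sqrt y), phi m t)
        = (∫ t in (0:ℝ)..(1:ℝ), phi m t) + Fm (m * Rl ^ α * Real.sqrt y) := by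
      rw [hFmdef]
      exact (intervalIntegral.integral_add_adjacent_intervals
        (phi_ii0 hm zero_le_one) (phi_ii one_pos hpy)).symm
    rw [hHdef, hH'def]
    simp only
    rw [e1, gGamma_eq_F m hpy hqy, gGamma_eq_F (m + 2 / α) hpy hqy]
  -- derivatives
  have hu₁ : HasDerivAt (fun y => m * Rl ^ α * Real.sqrt y) (m * Rl ^ α * (1 / (2 * c))) x :=
    (Real.hasDerivAt_sqrt hx.ne').const_mul (m * Rl ^ α)
  have hu₂ : HasDerivAt (fun y => m * Ru ^ α * Real.sqrt y) (m * Ru ^ α * (1 / (2 * c))) x :=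
    (Real.hasDerivAt_sqrt hx.ne').const_mul (m * Ru ^ α)
  have hT1 : HasDerivAt (fun y => G⁻¹ * ((∫ t in (0:ℝ)..(1:ℝ), phi m t)
      + Fm (m * Rl ^ α * Real.sqrt y)))
      (G⁻¹ * (phi m p * (m * Rl ^ α * (1 / (2 * c))))) x :=
    (((hasDerivAt_F m hp).comp x hu₁).const_add _).const_mul _
  have hT2 : HasDerivAt (fun y => (G * A)⁻¹ * Ru ^ 2 *
      (Fm (m * Ru ^ α * Real.sqrt y) - Fm (m * Rl ^ α * Real.sqrt y)))
      ((G * A)⁻¹ * Ru ^ 2 * (phi m q * (m * Ru ^ α * (1 / (2 * c)))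
        - phi m p * (m * Rl ^ α * (1 / (2 * c))))) x :=
    (((hasDerivAt_F m hq).comp x hu₂).sub ((hasDerivAt_F m hp).comp x hu₁)).const_mul _
  have hpow : HasDerivAt (fun y : ℝ => y ^ (-(1 / α)))
      ((-(1 / α)) * x ^ (-(1 / α) - 1)) x :=
    Real.hasDerivAt_rpow_const (Or.inl hx.ne')
  have hT3 : HasDerivAt (fun y => (G * A)⁻¹ * (m ^ (2 / α))⁻¹ * y ^ (-(1 / α)) *
      (Fp (m * Ru ^ α * Real.sqrt y) - Fp (m * Rl ^ α * Real.sqrt y)))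
      (((G * A)⁻¹ * (m ^ (2 / α))⁻¹ * ((-(1 / α)) * x ^ (-(1 / α) - 1))) * (Fp q - Fp p)
        + ((G * A)⁻¹ * (m ^ (2 / α))⁻¹ * x ^ (-(1 / α))) *
          (phi (m + 2 / α) q * (m * Ru ^ α * (1 / (2 * c)))
            - phi (m + 2 / α) p * (m * Rl ^ α * (1 / (2 * c))))) x :=
    by have hd := (((hasDerivAt_F (m + 2 / α) hq).comp x hu₂).sub
        ((hasDerivAt_F (m + 2 / α) hp).comp x hu₁))
       exact (hpow.const_mul _).mul hd
  have hH' : HasDerivAt H'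
      ((G⁻¹ * (phi m p * (m * Rl ^ α * (1 / (2 * c)))))
        + ((G * A)⁻¹ * Ru ^ 2 * (phi m q * (m * Ru ^ α * (1 / (2 * c)))
            - phi m p * (m * Rl ^ α * (1 / (2 * c)))))
        - (((G * A)⁻¹ * (m ^ (2 / α))⁻¹ * ((-(1 / α)) * x ^ (-(1 / α) - 1))) * (Fp q - Fp p)
            + ((G * A)⁻¹ * (m ^ (2 / α))⁻¹ * x ^ (-(1 / α))) *
              (phi (m + 2 / α) q * (m * Ru ^ α * (1 / (2 * c)))
                - phi (m + 2 / α) p * (m * Rl ^ α * (1 / (2 * c)))))) x :=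
    (hT1.add hT2).sub hT3
  -- identify the derivative value
  have hval : (G⁻¹ * (phi m p * (m * Rl ^ α * (1 / (2 * c)))))
        + ((G * A)⁻¹ * Ru ^ 2 * (phi m q * (m * Ru ^ α * (1 / (2 * c)))
            - phi m p * (m * Rl ^ α * (1 / (2 * c)))))
        - (((G * A)⁻¹ * (m ^ (2 / α))⁻¹ * ((-(1 / α)) * x ^ (-(1 / α) - 1))) * (Fp q - Fp p)
            + ((G * A)⁻¹ * (m ^ (2 / α))⁻¹ * x ^ (-(1 / α))) *
              (phi (m + 2 / α) q * (m * Ru ^ α * (1 / (2 * c)))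
                - phi (m + 2 / α) p * (m * Rl ^ α * (1 / (2 * c)))))
      = gGamma (m + 2 / α) p q / (m ^ (2 / α) * x ^ (1 / α + 1) * α * A * G) := by
    have hgg : Fp q - Fp p = gGamma (m + 2 / α) p q := (gGamma_eq_F (m + 2 / α) hp hq).symm
    set X : ℝ := x ^ (1 / α) with hXdef
    have hX : 0 < X := Real.rpow_pos_of_pos hx _
    have hmα : (0:ℝ) < m ^ (2 / α) := Real.rpow_pos_of_pos hm _
    have hcx : c ^ (2 / α) = X := by
      rw [show (2 / α : ℝ) = (2:ℝ) * (1 / α) by ring, Real.rpow_mul hc.le]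
      congr 1
      rw [show ((2:ℝ) : ℝ) = ((2:ℕ) : ℝ) by norm_num, Real.rpow_natCast, pow_two, hcsq]
    have hRl2 : (Rl ^ α) ^ (2 / α) = Rl ^ 2 := by
      rw [← Real.rpow_mul h0.le,
        show α * (2 / α) = ((2:ℕ):ℝ) from by push_cast; field_simp, Real.rpow_natCast]
    have hRu2 : (Ru ^ α) ^ (2 / α) = Ru ^ 2 := by
      rw [← Real.rpow_mul (h0.trans hlu).le,
        show α * (2 / α) = ((2:ℕ):ℝ) from by push_cast; field_simp, Real.rpow_natCast]
    have hprw : (p : ℝ) ^ (2 / α) = m ^ (2 / α) * Rl ^ 2 * X := by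
      rw [hpdef, Real.mul_rpow (by positivity) hc.le, Real.mul_rpow hm.le hRlα.le,
        hRl2, hcx]
    have hqrw : (q : ℝ) ^ (2 / α) = m ^ (2 / α) * Ru ^ 2 * X := by
      rw [hqdef, Real.mul_rpow (by positivity) hc.le, Real.mul_rpow hm.le hRuα.le,
        hRu2, hcx]
    have hphip : phi (m + 2 / α) p = p ^ (2 / α) * phi m p := by
      unfold phi
      rw [show m + 2 / α - 1 = 2 / α + (m - 1) by ring, Real.rpow_add hp]
      ring
    have hphiq : phi (m + 2 / α) q = q ^ (2 / α) * phi m q := by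
      unfold phi
      rw [show m + 2 / α - 1 = 2 / α + (m - 1) by ring, Real.rpow_add hq]
      ring
    have hxe1 : x ^ (-(1 / α)) = X⁻¹ := by
      rw [Real.rpow_neg hx.le, hXdef]
    have hxe2 : x ^ (-(1 / α) - 1) = X⁻¹ * x⁻¹ := by
      rw [show (-(1 / α) - 1 : ℝ) = -(1 / α) + (-1) by ring, Real.rpow_add hx,
        hxe1, Real.rpow_neg_one]
    have hxe3 : x ^ (1 / α + 1) = X * x := by
      rw [Real.rpow_add hx, Real.rpow_one, hXdef]
    rw [hgg, hphip, hphiq, hprw, hqrw, hxe1, hxe2, hxe3]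
    field_simp
    ring
  rw [hval] at hH'
  exact (hH'.congr_of_eventuallyEq hHH').congr_of_eventuallyEq hΦH
end
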